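/- Let M be a finite irreducible projection monoid on F² with trace group G, k kernels, and l images. Then M has exactly kl·|G| non-zero non-invertible elements; moreover 0 ∈ M if and only if some line is both a kernel and an image of M. -/

import Mathlib

/-- A projection on `F²`: an idempotent linear endomorphism of rank 1. -/
def IsProj2 {F : Type*} [Field F] (p : Module.End F (Fin 2 → F)) : Prop :=
  p * p = p ∧ Module.finrank F (LinearMap.range p) = 1

/-- The set of kernels (lines) of a projection monoid `M` on `F²`. -/
def kersOf {F : Type*} [Field F] (M : Submonoid (Module.End F (Fin 2 → F))) :
    Set (Submodule F (Fin 2 → F)) :=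
  {K | ∃ p ∈ M, IsProj2 p ∧ LinearMap.ker p = K}

/-- The set of images (lines) of a projection monoid `M` on `F²`. -/
def imsOf {F : Type*} [Field F] (M : Submonoid (Module.End F (Fin 2 → F))) :
    Set (Submodule F (Fin 2 → F)) :=
  {L | ∃ p ∈ M, IsProj2 p ∧ LinearMap.range p = L}

/-- The trace group of `M`: the subgroup of `Fˣ` generated by the non-zero traces
of the non-invertible elements of `M`. -/
def traceGroup {F : Type*} [Field F] (M : Submonoid (Module.End F (Fin 2 → F))) :
    Subgroup Fˣ :=
  Subgroup.closure {u : Fˣ | ∃ m ∈ M, ¬ IsUnit m ∧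
    (u : F) = LinearMap.trace F (Fin 2 → F) m}

namespace Stmt11Aux
open LinearMap Module

variable {F : Type*} [Field F]

/-- outer product: x ↦ f x • v -/
noncomputable def o (f : (Fin 2 → F) →ₗ[F] F) (v : Fin 2 → F) : Module.End F (Fin 2 → F) :=
  f.smulRight v

@[simp] lemma o_apply (f : (Fin 2 → F) →ₗ[F] F) (v x : Fin 2 → F) : o f v x = f x • v := rfl

lemma o_mul (f g : (Fin 2 → F) →ₗ[F] F) (v w : Fin 2 → F) :
    o f v * o g w = f w • o g v := by
  ext x; simp [Module.End.mul_apply]; ring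

lemma o_smul (c : F) (f : (Fin 2 → F) →ₗ[F] F) (v : Fin 2 → F) :
    c • o f v = o (c • f) v := by
  ext x; simp; ring

lemma o_ne_zero {f : (Fin 2 → F) →ₗ[F] F} {v : Fin 2 → F} (hf : f ≠ 0) (hv : v ≠ 0) :
    o f v ≠ 0 := by
  obtain ⟨u, hu⟩ : ∃ u, f u ≠ 0 := by
    by_contra h; push_neg at h; exact hf (LinearMap.ext fun u => h u)
  intro h
  have : f u • v = 0 := by
    have h2 := congrArg (fun (m : Module.End F (Fin 2 → F)) => m u) h
    simpa using h2
  rcases smul_eq_zero.mp this with h1 | h2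
  · exact hu h1
  · exact hv h2

lemma o_ker {f : (Fin 2 → F) →ₗ[F] F} (v : Fin 2 → F) (hv : v ≠ 0) :
    LinearMap.ker (o f v) = LinearMap.ker f := by
  ext x; simp [LinearMap.mem_ker, smul_eq_zero, hv]

lemma o_range {f : (Fin 2 → F) →ₗ[F] F} (hf : f ≠ 0) (v : Fin 2 → F) :
    LinearMap.range (o f v) = Submodule.span F {v} := by
  obtain ⟨u, hu⟩ : ∃ u, f u ≠ 0 := by
    by_contra h; push_neg at h; exact hf (LinearMap.ext fun u => h u)
  apply le_antisymm
  · rintro y ⟨x, rfl⟩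
    exact Submodule.smul_mem _ _ (Submodule.mem_span_singleton_self v)
  · rw [Submodule.span_le, Set.singleton_subset_iff]
    exact ⟨(f u)⁻¹ • u, by simp [smul_smul, inv_mul_cancel₀ hu]⟩

lemma o_trace (f : (Fin 2 → F) →ₗ[F] F) (v : Fin 2 → F) :
    LinearMap.trace F (Fin 2 → F) (o f v) = f v := by
  classical
  rw [LinearMap.trace_eq_matrix_trace F (Pi.basisFun F (Fin 2))]
  rw [Matrix.trace]
  have hv : f v = ∑ i : Fin 2, v i • f (fun j => if i = j then 1 else 0) :=
    LinearMap.pi_apply_eq_sum_univ f v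
  rw [hv]
  congr 1
  ext i
  have : (fun j => if i = j then (1:F) else 0) = Pi.single i 1 := by
    ext j; simp [Pi.single_apply, eq_comm]
  simp [Matrix.diag, LinearMap.toMatrix_apply, o, Pi.basisFun_repr, this, mul_comm]

lemma finrank_V : Module.finrank F (Fin 2 → F) = 2 := by
  simp [Module.finrank_pi]

lemma smul_cancel0 {m : Module.End F (Fin 2 → F)} (hm : m ≠ 0) {c d : F}
    (h : c • m = d • m) : c = d := by
  obtain ⟨x, hx⟩ : ∃ x, m x ≠ 0 := by
    by_contra h'; push_neg at h'; exact hm (LinearMap.ext fun x => h' x)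
  have h2 : (c - d) • m x = 0 := by
    rw [sub_smul]
    have hc : c • m x = d • m x := by
      have := congrArg (fun (n : Module.End F (Fin 2 → F)) => n x) h
      simpa using this
    rw [hc, sub_self]
  rcases smul_eq_zero.mp h2 with h1 | h2
  · exact sub_eq_zero.mp h1
  · exact absurd h2 hx

lemma span_ne_top {v : Fin 2 → F} (hv : v ≠ 0) : Submodule.span F {v} ≠ ⊤ := by
  intro h
  have h2 : Module.finrank F (Submodule.span F {v}) = 1 := finrank_span_singleton hv
  rw [h, finrank_top, finrank_V] at h2
  norm_num at h2

lemma o_not_unit {f : (Fin 2 → F) →ₗ[F] F} (hf : f ≠ 0) {v : Fin 2 → F} (hv : v ≠ 0) :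
    ¬ IsUnit (o f v) := by
  intro h
  have hb : Function.Surjective (o f v) := ((Module.End.isUnit_iff _).mp h).2
  have h3 : LinearMap.range (o f v) = ⊤ := LinearMap.range_eq_top.mpr hb
  rw [o_range hf v] at h3
  exact span_ne_top hv h3

/-- rank-1 structure of non-zero non-invertible endomorphisms of the plane -/
lemma exists_o {m : Module.End F (Fin 2 → F)} (hm : m ≠ 0) (hu : ¬ IsUnit m) :
    ∃ f v, f ≠ 0 ∧ v ≠ 0 ∧ m = o f v := by
  classical
  have hnb : ¬ Function.Bijective m := fun h => hu ((Module.End.isUnit_iff _).mpr h)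
  have hni : ¬ Function.Injective m := by
    intro h; exact hnb ⟨h, LinearMap.injective_iff_surjective.mp h⟩
  obtain ⟨a, b, hab, hne⟩ : ∃ a b, m a = m b ∧ a ≠ b := by
    simp only [Function.Injective, not_forall] at hni
    obtain ⟨a, b, h1, h2⟩ := hni; exact ⟨a, b, h1, h2⟩
  set u := a - b with hu'
  have hu0 : u ≠ 0 := sub_ne_zero.mpr hne
  have hmu : m u = 0 := by rw [hu', map_sub, hab, sub_self]
  obtain ⟨w, hw⟩ : ∃ w, m w ≠ 0 := by
    by_contra h'; push_neg at h'; exact hm (LinearMap.ext fun x => h' x)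
  have hli : LinearIndependent F ![u, w] := by
    rw [LinearIndependent.pair_iff' hu0]
    intro c hc
    apply hw; rw [← hc, map_smul, hmu, smul_zero]
  have hcard : Fintype.card (Fin 2) = Module.finrank F (Fin 2 → F) := by
    simp [finrank_V]
  let B := basisOfLinearIndependentOfCardEqFinrank hli hcard
  have hB : ⇑B = ![u, w] := coe_basisOfLinearIndependentOfCardEqFinrank hli hcard
  refine ⟨B.coord 1, m w, ?_, hw, ?_⟩
  · intro h
    have : B.coord 1 (B 1) = 0 := by rw [h]; rfl
    rw [B.coord_apply, B.repr_self] at this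
    simp at this
  · apply B.ext
    intro i
    have h0 : B 0 = u := by rw [hB]; rfl
    have h1 : B 1 = w := by rw [hB]; rfl
    fin_cases i
    · show m (B 0) = (B.coord 1) (B 0) • (m w)
      rw [h0, hmu, B.coord_apply, ← h0, B.repr_self]
      simp
    · show m (B 1) = (B.coord 1) (B 1) • (m w)
      rw [h1, B.coord_apply, ← h1, B.repr_self]
      simp

variable {M : Submonoid (Module.End F (Fin 2 → F))}

lemma orbit_escape
    (hirr : ∀ W : Submodule F (Fin 2 → F), (∀ m ∈ M, ∀ w ∈ W, m w ∈ W) → W = ⊥ ∨ W = ⊤)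
    {f : (Fin 2 → F) →ₗ[F] F} (hf : f ≠ 0) {v : Fin 2 → F} (hv : v ≠ 0) :
    ∃ a ∈ M, f (a v) ≠ 0 := by
  by_contra hcon
  push_neg at hcon
  set W : Submodule F (Fin 2 → F) := Submodule.span F {x | ∃ a ∈ M, a v = x} with hW
  have hinv : ∀ m ∈ M, ∀ w ∈ W, m w ∈ W := by
    intro m hm w hw
    induction hw using Submodule.span_induction with
    | mem x hx =>
      obtain ⟨a, ha, rfl⟩ := hx
      exact Submodule.subset_span ⟨m * a, M.mul_mem hm ha, rfl⟩
    | zero => simp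
    | add x y _ _ hx hy => rw [map_add]; exact W.add_mem hx hy
    | smul c x _ hx => rw [map_smul]; exact W.smul_mem c hx
  have hWbot : W ≠ ⊥ := by
    intro h
    have hvW : v ∈ W := Submodule.subset_span ⟨1, M.one_mem, by simp⟩
    rw [h, Submodule.mem_bot] at hvW
    exact hv hvW
  have hWtop : W = ⊤ := (hirr W hinv).resolve_left hWbot
  have hWker : W ≤ LinearMap.ker f := by
    rw [hW, Submodule.span_le]
    rintro x ⟨a, ha, rfl⟩
    exact hcon a ha
  obtain ⟨u, hu⟩ : ∃ u, f u ≠ 0 := by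
    by_contra h'; push_neg at h'; exact hf (LinearMap.ext fun x => h' x)
  exact hu (hWker (hWtop ▸ Submodule.mem_top))

lemma pow_of_idem_like {m : Module.End F (Fin 2 → F)} {t : F} (h : m * m = t • m) :
    ∀ k : ℕ, m ^ (k + 1) = t ^ k • m := by
  intro k
  induction k with
  | zero => simp
  | succ k ih =>
    rw [pow_succ, ih, smul_mul_assoc, h, smul_smul, pow_succ]

lemma exists_pow_eq_one (hfin : (M : Set (Module.End F (Fin 2 → F))).Finite)
    {m : Module.End F (Fin 2 → F)} (hm : m ∈ M) (hm0 : m ≠ 0) {t : F}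
    (hmt : m * m = t • m) (ht : t ≠ 0) : ∃ n : ℕ, 0 < n ∧ t ^ n = 1 := by
  have hmap : Set.MapsTo (fun k : ℕ => m ^ (k + 1)) Set.univ (M : Set _) := by
    intro k _; exact M.pow_mem hm (k + 1)
  obtain ⟨i, -, j, -, hij, hfij⟩ :=
    Set.infinite_univ.exists_ne_map_eq_of_mapsTo hmap hfin
  have hti : t ^ i = t ^ j := by
    apply smul_cancel0 hm0
    rw [← pow_of_idem_like hmt i, ← pow_of_idem_like hmt j, hfij]
  rcases hij.lt_or_gt with hlt | hlt
  · refine ⟨j - i, by omega, ?_⟩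
    have : t ^ (j - i) * t ^ i = 1 * t ^ i := by
      rw [one_mul, ← pow_add]; rw [Nat.sub_add_cancel hlt.le, hti]
    exact mul_right_cancel₀ (pow_ne_zero i ht) this
  · refine ⟨i - j, by omega, ?_⟩
    have : t ^ (i - j) * t ^ j = 1 * t ^ j := by
      rw [one_mul, ← pow_add]; rw [Nat.sub_add_cancel hlt.le, hti.symm]
    exact mul_right_cancel₀ (pow_ne_zero j ht) this

lemma idem_extract (hfin : (M : Set (Module.End F (Fin 2 → F))).Finite)
    {m : Module.End F (Fin 2 → F)} (hm : m ∈ M) (hm0 : m ≠ 0) {t : F}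
    (hmt : m * m = t • m) (ht : t ≠ 0) :
    t⁻¹ • m ∈ M ∧ (t⁻¹ • m) * (t⁻¹ • m) = t⁻¹ • m := by
  obtain ⟨n, hn, htn⟩ := exists_pow_eq_one hfin hm hm0 hmt ht
  constructor
  · have hpow : m ^ n = t ^ (n - 1) • m := by
      have : n = (n - 1) + 1 := by omega
      rw [this]; exact pow_of_idem_like hmt (n - 1)
    have hs : t ^ (n - 1) * t = 1 := by
      rw [← pow_succ]
      have : n - 1 + 1 = n := by omega
      rw [this, htn]
    have htinv : t⁻¹ = t ^ (n - 1) := by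
      field_simp
      linear_combination -hs
    rw [htinv, ← hpow]
    exact M.pow_mem hm n
  · rw [smul_mul_assoc, mul_smul_comm, hmt, smul_smul, smul_smul]
    congr 1
    field_simp

/-- the scalar set of an element -/
def Lam (M : Submonoid (Module.End F (Fin 2 → F))) (m : Module.End F (Fin 2 → F)) : Set F :=
  {lam : F | lam ≠ 0 ∧ lam • m ∈ M}

lemma lam_pow_mem {e : Module.End F (Fin 2 → F)} (he : e ∈ M) (hee : e * e = e)
    {lam : F} (hl : lam • e ∈ M) : ∀ k : ℕ, lam ^ k • e ∈ M := by
  intro k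
  induction k with
  | zero => simpa using he
  | succ k ih =>
    have : (lam • e) * (lam ^ k • e) = lam ^ (k + 1) • e := by
      rw [smul_mul_assoc, mul_smul_comm, hee, smul_smul, pow_succ, mul_comm]
    rw [← this]
    exact M.mul_mem hl ih

lemma lam_inv_mem (hfin : (M : Set (Module.End F (Fin 2 → F))).Finite)
    {e : Module.End F (Fin 2 → F)} (he : e ∈ M) (hee : e * e = e) (he0 : e ≠ 0)
    {lam : F} (hl : lam ∈ Lam M e) : lam⁻¹ ∈ Lam M e := by
  obtain ⟨hl0, hlm⟩ := hl
  have hmm : (lam • e) * (lam • e) = lam • (lam • e) := by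
    rw [smul_mul_assoc, mul_smul_comm, hee]
  obtain ⟨n, hn, htn⟩ := exists_pow_eq_one hfin hlm (by
      simp only [ne_eq, smul_eq_zero, not_or]; exact ⟨hl0, he0⟩) hmm hl0
  refine ⟨inv_ne_zero hl0, ?_⟩
  have hs : lam ^ (n - 1) * lam = 1 := by
    rw [← pow_succ]
    have : n - 1 + 1 = n := by omega
    rw [this, htn]
  have htinv : lam⁻¹ = lam ^ (n - 1) := by
    field_simp
    linear_combination -hs
  rw [htinv]
  exact lam_pow_mem he hee hlm (n - 1)

lemma lam_mul_mem {e : Module.End F (Fin 2 → F)} (hee : e * e = e)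
    {lam mu : F} (hl : lam ∈ Lam M e) (hm : mu ∈ Lam M e) : lam * mu ∈ Lam M e := by
  refine ⟨mul_ne_zero hl.1 hm.1, ?_⟩
  have : (lam • e) * (mu • e) = (lam * mu) • e := by
    rw [smul_mul_assoc, mul_smul_comm, hee, smul_smul]
  rw [← this]
  exact M.mul_mem hl.2 hm.2

/-- the fundamental chain computation -/
lemma chain (f₀ : (Fin 2 → F) →ₗ[F] F) (v₀ : Fin 2 → F) (b m a : Module.End F (Fin 2 → F)) :
    o f₀ v₀ * b * m * a * o f₀ v₀ = (f₀ (b (m (a v₀)))) • o f₀ v₀ := by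
  ext x i
  simp [Module.End.mul_apply, map_smul]
  ring

/-- producing kernels and images of projections in `M` from arbitrary
rank-one elements of `M` -/
lemma mem_kers_ims (hfin : (M : Set (Module.End F (Fin 2 → F))).Finite)
    (hirr : ∀ W : Submodule F (Fin 2 → F), (∀ m ∈ M, ∀ w ∈ W, m w ∈ W) → W = ⊥ ∨ W = ⊤)
    {f : (Fin 2 → F) →ₗ[F] F} {v : Fin 2 → F} (hf : f ≠ 0) (hv : v ≠ 0)
    (hm : o f v ∈ M) :
    LinearMap.ker f ∈ kersOf M ∧ Submodule.span F {v} ∈ imsOf M := by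
  obtain ⟨a, haM, hfa⟩ := orbit_escape hirr hf hv
  set t := f ((a : Module.End F (Fin 2 → F)) v) with ht
  constructor
  · -- kernel part, via a * (o f v) = o f (a v)
    have hav : (a : Module.End F (Fin 2 → F)) v ≠ 0 := by
      intro h; apply hfa; rw [ht, h, map_zero]
    have heq : a * o f v = o f (a v) := by
      ext x; simp [Module.End.mul_apply, map_smul]
    have hm₂ : o f (a v) ∈ M := heq ▸ M.mul_mem haM hm
    have hmm : o f (a v) * o f (a v) = t • o f (a v) := o_mul f f (a v) (a v)
    obtain ⟨heM, hee⟩ := idem_extract hfin hm₂ (o_ne_zero hf hav) hmm hfa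
    rw [o_smul] at heM hee
    have hf' : t⁻¹ • f ≠ 0 := smul_ne_zero (inv_ne_zero hfa) hf
    refine ⟨o (t⁻¹ • f) (a v), heM, ⟨hee, ?_⟩, ?_⟩
    · rw [o_range hf', finrank_span_singleton hav]
    · rw [o_ker _ hav]
      ext x
      simp [LinearMap.mem_ker, smul_eq_zero, inv_ne_zero hfa]
  · -- image part, via (o f v) * a = o (f ∘ a) v
    have hfa' : (f ∘ₗ (a : Module.End F (Fin 2 → F))) ≠ 0 := by
      intro h
      apply hfa
      have := congrArg (fun (g : (Fin 2 → F) →ₗ[F] F) => g v) h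
      simpa using this
    have heq : o f v * a = o (f ∘ₗ (a : Module.End F (Fin 2 → F))) v := by
      ext x; simp [Module.End.mul_apply]
    have hm₃ : o (f ∘ₗ (a : Module.End F (Fin 2 → F))) v ∈ M := heq ▸ M.mul_mem hm haM
    have htv : (f ∘ₗ (a : Module.End F (Fin 2 → F))) v = t := rfl
    have hmm : o (f ∘ₗ (a : Module.End F (Fin 2 → F))) v *
        o (f ∘ₗ (a : Module.End F (Fin 2 → F))) v
        = t • o (f ∘ₗ (a : Module.End F (Fin 2 → F))) v := by
      rw [o_mul, htv]
    obtain ⟨heM, hee⟩ := idem_extract hfin hm₃ (o_ne_zero hfa' hv) hmm hfa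
    rw [o_smul] at heM hee
    have hf' : t⁻¹ • (f ∘ₗ (a : Module.End F (Fin 2 → F))) ≠ 0 :=
      smul_ne_zero (inv_ne_zero hfa) hfa'
    refine ⟨o (t⁻¹ • (f ∘ₗ (a : Module.End F (Fin 2 → F)))) v, heM, ⟨hee, ?_⟩, ?_⟩
    · rw [o_range hf', finrank_span_singleton hv]
    · rw [o_range hf']

/-- existence of a base projection in `M` -/
lemma exists_base
    (hgen : ∃ P : Set (Module.End F (Fin 2 → F)),
      (∀ p ∈ P, IsProj2 p) ∧ M = Submonoid.closure P)
    (hirr : ∀ W : Submodule F (Fin 2 → F), (∀ m ∈ M, ∀ w ∈ W, m w ∈ W) → W = ⊥ ∨ W = ⊤) :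
    ∃ (f₀ : (Fin 2 → F) →ₗ[F] F) (v₀ : Fin 2 → F),
      f₀ ≠ 0 ∧ v₀ ≠ 0 ∧ f₀ v₀ = 1 ∧ o f₀ v₀ ∈ M := by
  obtain ⟨P, hP, hMP⟩ := hgen
  obtain ⟨p, hp⟩ : P.Nonempty := by
    by_contra h
    rw [Set.not_nonempty_iff_eq_empty] at h
    subst h
    rw [Submonoid.closure_empty] at hMP
    have hsingle : (Pi.single 0 1 : Fin 2 → F) ≠ 0 := by
      intro h
      have := congrFun h 0
      simp at this
    have hint : ∀ m ∈ M, ∀ w ∈ Submodule.span F {(Pi.single 0 1 : Fin 2 → F)},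
        m w ∈ Submodule.span F {(Pi.single 0 1 : Fin 2 → F)} := by
      intro m hm w hw
      rw [hMP, Submonoid.mem_bot] at hm
      subst hm
      simpa using hw
    rcases hirr (Submodule.span F {Pi.single 0 1}) hint with h | h
    · rw [Submodule.span_singleton_eq_bot] at h
      exact hsingle h
    · exact span_ne_top hsingle h
  have hpM : p ∈ M := by
    rw [hMP]; exact Submonoid.subset_closure hp
  obtain ⟨hpp, hpr⟩ := hP p hp
  have hp0 : p ≠ 0 := by
    intro h
    rw [h] at hpr
    rw [LinearMap.range_zero, finrank_bot] at hpr
    norm_num at hpr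
  have hpu : ¬ IsUnit p := by
    intro h
    have hb : Function.Surjective p := ((Module.End.isUnit_iff _).mp h).2
    rw [LinearMap.range_eq_top.mpr hb, finrank_top, finrank_V] at hpr
    norm_num at hpr
  obtain ⟨f, v, hf, hv, rfl⟩ := exists_o hp0 hpu
  refine ⟨f, v, hf, hv, ?_, hpM⟩
  have : f v • o f v = (1 : F) • o f v := by
    rw [one_smul, ← o_mul, hpp]
  exact smul_cancel0 (o_ne_zero hf hv) this

end Stmt11Aux

namespace E
open LinearMap Module Stmt11Aux

variable {F : Type*} [Field F] {M : Submonoid (Module.End F (Fin 2 → F))}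

lemma lam_finite (hfin : (M : Set (Module.End F (Fin 2 → F))).Finite)
    {m : Module.End F (Fin 2 → F)} (hm0 : m ≠ 0) : (Lam M m).Finite := by
  have hinj : Set.InjOn (fun lam : F => lam • m)
      ((fun lam : F => lam • m) ⁻¹' (M : Set (Module.End F (Fin 2 → F)))) :=
    fun x _ y _ h => smul_cancel0 hm0 h
  exact (hfin.preimage hinj).subset (fun lam hl => hl.2)

lemma functional_eq_smul {g h : (Fin 2 → F) →ₗ[F] F} (hg : g ≠ 0) (hh : h ≠ 0)
    (hker : LinearMap.ker g = LinearMap.ker h) : ∃ β : F, β ≠ 0 ∧ g = β • h := by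
  obtain ⟨u, hu⟩ : ∃ u, h u ≠ 0 := by
    by_contra h'; push_neg at h'; exact hh (LinearMap.ext fun x => h' x)
  set β := g u * (h u)⁻¹ with hβ
  have hgx : ∀ x, g x = β * h x := by
    intro x
    have hxk : x - ((h x) * (h u)⁻¹) • u ∈ LinearMap.ker h := by
      simp only [LinearMap.mem_ker, map_sub, map_smul, smul_eq_mul]
      field_simp
      ring
    rw [← hker] at hxk
    have := LinearMap.mem_ker.mp hxk
    rw [map_sub, map_smul, sub_eq_zero] at this
    rw [this]
    simp only [smul_eq_mul, hβ]
    field_simp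
  refine ⟨β, ?_, ?_⟩
  · intro h0
    apply hg
    refine LinearMap.ext fun x => ?_
    rw [hgx x, h0, zero_mul]; rfl
  · refine LinearMap.ext fun x => ?_
    rw [hgx x]; rfl

lemma ker_line {f : (Fin 2 → F) →ₗ[F] F} (hf : f ≠ 0) :
    Module.finrank F (LinearMap.ker f) = 1 := by
  have hr : LinearMap.range f = ⊤ := by
    rcases Ideal.eq_bot_or_top (LinearMap.range f : Ideal F) with h | h
    · exact absurd (LinearMap.range_eq_bot.mp h) hf
    · exact h
  have := LinearMap.finrank_range_add_finrank_ker f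
  rw [hr, finrank_top, finrank_self, finrank_V] at this
  omega

/-- cardinality transfer between scalar sets of two rank-one elements of `M` -/
lemma lam_card (hfin : (M : Set (Module.End F (Fin 2 → F))).Finite)
    (hirr : ∀ W : Submodule F (Fin 2 → F), (∀ m ∈ M, ∀ w ∈ W, m w ∈ W) → W = ⊥ ∨ W = ⊤)
    {f₀ h : (Fin 2 → F) →ₗ[F] F} {v₀ w : Fin 2 → F}
    (hf₀ : f₀ ≠ 0) (hv₀ : v₀ ≠ 0) (he : o f₀ v₀ ∈ M)
    (hh : h ≠ 0) (hw : w ≠ 0) (hm₁ : o h w ∈ M) :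
    (Lam M (o h w)).ncard = (Lam M (o f₀ v₀)).ncard := by
  obtain ⟨a, haM, ha⟩ := orbit_escape hirr hh hv₀
  obtain ⟨b, hbM, hb⟩ := orbit_escape hirr hf₀ hw
  set c := h ((a : Module.End F (Fin 2 → F)) v₀) * f₀ ((b : Module.End F (Fin 2 → F)) w)
    with hc'
  have hc : c ≠ 0 := mul_ne_zero ha hb
  have fwd : ∀ lam ∈ Lam M (o h w), lam * c ∈ Lam M (o f₀ v₀) := by
    intro lam hlam
    refine ⟨mul_ne_zero hlam.1 hc, ?_⟩
    have key := chain f₀ v₀ b (lam • o h w) a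
    have hscal : f₀ (b ((lam • o h w) (a v₀))) = lam * c := by
      simp only [LinearMap.smul_apply, o_apply, map_smul, smul_eq_mul, hc']
      try ring
    rw [hscal] at key
    rw [← key]
    exact M.mul_mem (M.mul_mem (M.mul_mem (M.mul_mem he hbM) hlam.2) haM) he
  have bwd : ∀ mu ∈ Lam M (o f₀ v₀), mu * c ∈ Lam M (o h w) := by
    intro mu hmu
    refine ⟨mul_ne_zero hmu.1 hc, ?_⟩
    have key := chain h w a (mu • o f₀ v₀) b
    have hscal : h (a ((mu • o f₀ v₀) (b w))) = mu * c := by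
      simp only [LinearMap.smul_apply, o_apply, map_smul, smul_eq_mul, hc']
      try ring
    rw [hscal] at key
    rw [← key]
    exact M.mul_mem (M.mul_mem (M.mul_mem (M.mul_mem hm₁ haM) hmu.2) hbM) hm₁
  have hfin1 : (Lam M (o f₀ v₀)).Finite := lam_finite hfin (o_ne_zero hf₀ hv₀)
  have hfin2 : (Lam M (o h w)).Finite := lam_finite hfin (o_ne_zero hh hw)
  have hinj : Set.InjOn (fun lam : F => lam * c) Set.univ := by
    intro x _ y _ hxy
    exact mul_right_cancel₀ hc hxy
  apply le_antisymm
  · exact Set.ncard_le_ncard_of_injOn _ fwd (hinj.mono (Set.subset_univ _)) hfin1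
  · exact Set.ncard_le_ncard_of_injOn _ bwd (hinj.mono (Set.subset_univ _)) hfin2

/-- the scalar sets of two idempotent rank-one elements of `M` coincide -/
lemma lam_eq_of_idems (hfin : (M : Set (Module.End F (Fin 2 → F))).Finite)
    (hirr : ∀ W : Submodule F (Fin 2 → F), (∀ m ∈ M, ∀ w ∈ W, m w ∈ W) → W = ⊥ ∨ W = ⊤)
    {f₀ h : (Fin 2 → F) →ₗ[F] F} {v₀ w : Fin 2 → F}
    (hf₀ : f₀ ≠ 0) (hv₀ : v₀ ≠ 0) (he : o f₀ v₀ ∈ M) (hfv : f₀ v₀ = 1)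
    (hh : h ≠ 0) (hw : w ≠ 0) (he' : o h w ∈ M) (hhw : h w = 1) :
    Lam M (o h w) = Lam M (o f₀ v₀) := by
  obtain ⟨a, haM, ha⟩ := orbit_escape hirr hh hv₀
  obtain ⟨b, hbM, hb⟩ := orbit_escape hirr hf₀ hw
  set c := h ((a : Module.End F (Fin 2 → F)) v₀) * f₀ ((b : Module.End F (Fin 2 → F)) w)
    with hc'
  have hc : c ≠ 0 := mul_ne_zero ha hb
  have hee : o f₀ v₀ * o f₀ v₀ = o f₀ v₀ := by rw [o_mul, hfv, one_smul]
  have hee' : o h w * o h w = o h w := by rw [o_mul, hhw, one_smul]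
  have he0 : o f₀ v₀ ≠ 0 := o_ne_zero hf₀ hv₀
  have he0' : o h w ≠ 0 := o_ne_zero hh hw
  have fwd : ∀ lam ∈ Lam M (o h w), lam * c ∈ Lam M (o f₀ v₀) := by
    intro lam hlam
    refine ⟨mul_ne_zero hlam.1 hc, ?_⟩
    have key := chain f₀ v₀ b (lam • o h w) a
    have hscal : f₀ (b ((lam • o h w) (a v₀))) = lam * c := by
      simp only [LinearMap.smul_apply, o_apply, map_smul, smul_eq_mul, hc']
      try ring
    rw [hscal] at key
    rw [← key]
    exact M.mul_mem (M.mul_mem (M.mul_mem (M.mul_mem he hbM) hlam.2) haM) he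
  have bwd : ∀ mu ∈ Lam M (o f₀ v₀), mu * c ∈ Lam M (o h w) := by
    intro mu hmu
    refine ⟨mul_ne_zero hmu.1 hc, ?_⟩
    have key := chain h w a (mu • o f₀ v₀) b
    have hscal : h (a ((mu • o f₀ v₀) (b w))) = mu * c := by
      simp only [LinearMap.smul_apply, o_apply, map_smul, smul_eq_mul, hc']
      try ring
    rw [hscal] at key
    rw [← key]
    exact M.mul_mem (M.mul_mem (M.mul_mem (M.mul_mem he' haM) hmu.2) hbM) he'
  have hone' : (1 : F) ∈ Lam M (o h w) := ⟨one_ne_zero, by simpa using he'⟩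
  have hone : (1 : F) ∈ Lam M (o f₀ v₀) := ⟨one_ne_zero, by simpa using he⟩
  have hcE : c ∈ Lam M (o f₀ v₀) := by simpa using fwd 1 hone'
  have hcE' : c ∈ Lam M (o h w) := by simpa using bwd 1 hone
  have hcEinv : c⁻¹ ∈ Lam M (o f₀ v₀) := lam_inv_mem hfin he hee he0 hcE
  have hcEinv' : c⁻¹ ∈ Lam M (o h w) := lam_inv_mem hfin he' hee' he0' hcE'
  ext lam
  constructor
  · intro hlam
    have h1 : lam * c ∈ Lam M (o f₀ v₀) := fwd lam hlam
    have h2 : lam * c * c⁻¹ ∈ Lam M (o f₀ v₀) := lam_mul_mem hee h1 hcEinv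
    have : lam * c * c⁻¹ = lam := by field_simp
    rwa [this] at h2
  · intro hlam
    have h1 : lam * c ∈ Lam M (o h w) := bwd lam hlam
    have h2 : lam * c * c⁻¹ ∈ Lam M (o h w) := lam_mul_mem hee' h1 hcEinv'
    have : lam * c * c⁻¹ = lam := by field_simp
    rwa [this] at h2

end E

namespace E
open LinearMap Module Stmt11Aux

variable {F : Type*} [Field F] {M : Submonoid (Module.End F (Fin 2 → F))}

lemma proj2_decomp {p : Module.End F (Fin 2 → F)} (hp : IsProj2 p) :
    ∃ g u, g ≠ 0 ∧ u ≠ 0 ∧ g u = 1 ∧ p = o g u := by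
  obtain ⟨hpp, hpr⟩ := hp
  have hp0 : p ≠ 0 := by
    intro h
    rw [h, LinearMap.range_zero, finrank_bot] at hpr
    norm_num at hpr
  have hpu : ¬ IsUnit p := by
    intro h
    have hb : Function.Surjective p := ((Module.End.isUnit_iff _).mp h).2
    rw [LinearMap.range_eq_top.mpr hb, finrank_top, finrank_V] at hpr
    norm_num at hpr
  obtain ⟨g, u, hg, hu, rfl⟩ := exists_o hp0 hpu
  refine ⟨g, u, hg, hu, ?_, rfl⟩
  have : g u • o g u = (1 : F) • o g u := by
    rw [one_smul, ← o_mul, hpp]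
  exact smul_cancel0 (o_ne_zero hg hu) this

lemma ker_smul_eq {c : F} (hc : c ≠ 0) (g : (Fin 2 → F) →ₗ[F] F) :
    LinearMap.ker (c • g) = LinearMap.ker g := by
  ext x
  simp [LinearMap.mem_ker, smul_eq_zero, hc]

/-- membership lemmas for elements of the counted set -/
lemma S_mem (hfin : (M : Set (Module.End F (Fin 2 → F))).Finite)
    (hirr : ∀ W : Submodule F (Fin 2 → F), (∀ m ∈ M, ∀ w ∈ W, m w ∈ W) → W = ⊥ ∨ W = ⊤)
    {m : Module.End F (Fin 2 → F)} (hmM : m ∈ M) (hm0 : m ≠ 0) (hmU : ¬ IsUnit m) :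
    LinearMap.ker m ∈ kersOf M ∧ LinearMap.range m ∈ imsOf M := by
  obtain ⟨f, v, hf, hv, rfl⟩ := exists_o hm0 hmU
  rw [o_ker _ hv, o_range hf]
  exact mem_kers_ims hfin hirr hf hv hmM

/-- the central pair-count lemma -/
lemma pair_card (hfin : (M : Set (Module.End F (Fin 2 → F))).Finite)
    (hirr : ∀ W : Submodule F (Fin 2 → F), (∀ m ∈ M, ∀ w ∈ W, m w ∈ W) → W = ⊥ ∨ W = ⊤)
    {f₀ : (Fin 2 → F) →ₗ[F] F} {v₀ : Fin 2 → F}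
    (hf₀ : f₀ ≠ 0) (hv₀ : v₀ ≠ 0) (he : o f₀ v₀ ∈ M)
    {K L : Submodule F (Fin 2 → F)} (hK : K ∈ kersOf M) (hL : L ∈ imsOf M) :
    {m : Module.End F (Fin 2 → F) | (m ∈ M ∧ m ≠ 0 ∧ ¬ IsUnit m) ∧
      LinearMap.ker m = K ∧ LinearMap.range m = L}.ncard
      = (Lam M (o f₀ v₀)).ncard := by
  obtain ⟨p, hpM, hpP, hpker⟩ := hK
  obtain ⟨q, hqM, hqP, hqr⟩ := hL
  obtain ⟨g, u, hg, hu, hgu, rfl⟩ := proj2_decomp hpP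
  obtain ⟨g', u', hg', hu', hgu', rfl⟩ := proj2_decomp hqP
  rw [o_ker _ hu] at hpker
  rw [o_range hg'] at hqr
  obtain ⟨a, haM, ha⟩ := orbit_escape hirr hg' hu
  set h : (Fin 2 → F) →ₗ[F] F := g' ((a : Module.End F (Fin 2 → F)) u) • g with hh'
  have hh : h ≠ 0 := smul_ne_zero ha hg
  have hm₁M : o h u' ∈ M := by
    have heq : o g' u' * a * o g u = o h u' := by
      refine LinearMap.ext fun x => funext fun i => ?_
      simp only [Module.End.mul_apply, o_apply, map_smul, LinearMap.smul_apply, hh',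
        smul_eq_mul, Pi.smul_apply]
      ring
    rw [← heq]
    exact M.mul_mem (M.mul_mem hqM haM) hpM
  have hkerh : LinearMap.ker h = K := by rw [hh', ker_smul_eq ha g, hpker]
  have hkerm₁ : LinearMap.ker (o h u') = K := by rw [o_ker _ hu', hkerh]
  have hrangem₁ : LinearMap.range (o h u') = L := by rw [o_range hh, hqr]
  have hseteq : {m : Module.End F (Fin 2 → F) | (m ∈ M ∧ m ≠ 0 ∧ ¬ IsUnit m) ∧
      LinearMap.ker m = K ∧ LinearMap.range m = L}
      = (fun lam : F => lam • o h u') '' (Lam M (o h u')) := by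
    ext m
    constructor
    · rintro ⟨⟨hmM, hm0, hmU⟩, hker, hrange⟩
      obtain ⟨g₂, u₂, hg₂, hu₂, rfl⟩ := exists_o hm0 hmU
      rw [o_ker _ hu₂] at hker
      rw [o_range hg₂] at hrange
      have hkg₂ : LinearMap.ker g₂ = LinearMap.ker h := by rw [hker, hkerh]
      obtain ⟨β, hβ, hg₂h⟩ := functional_eq_smul hg₂ hh hkg₂
      have hu₂span : u₂ ∈ Submodule.span F {u'} := by
        rw [hqr, ← hrange]
        exact Submodule.mem_span_singleton_self u₂
      obtain ⟨α, hα⟩ := Submodule.mem_span_singleton.mp hu₂span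
      have hα0 : α ≠ 0 := by
        intro h0
        rw [h0, zero_smul] at hα
        exact hu₂ hα.symm
      refine ⟨β * α, ⟨mul_ne_zero hβ hα0, ?_⟩, ?_⟩
      · have : (β * α) • o h u' = o g₂ u₂ := by
          refine LinearMap.ext fun x => funext fun i => ?_
          simp only [LinearMap.smul_apply, o_apply, hg₂h, ← hα, smul_eq_mul,
            Pi.smul_apply]
          ring
        rw [this]; exact hmM
      · show (β * α) • o h u' = o g₂ u₂
        refine LinearMap.ext fun x => funext fun i => ?_
        simp only [LinearMap.smul_apply, o_apply, hg₂h, ← hα, smul_eq_mul,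
          Pi.smul_apply]
        ring
    · rintro ⟨lam, ⟨hl0, hlM⟩, rfl⟩
      have hs : lam • o h u' = o (lam • h) u' := o_smul lam h u'
      have hlh : lam • h ≠ 0 := smul_ne_zero hl0 hh
      refine ⟨⟨hlM, ?_, ?_⟩, ?_, ?_⟩
      · show lam • o h u' ≠ 0
        rw [hs]; exact o_ne_zero hlh hu'
      · show ¬ IsUnit (lam • o h u')
        rw [hs]; exact o_not_unit hlh hu'
      · show LinearMap.ker (lam • o h u') = K
        rw [hs, o_ker _ hu', ker_smul_eq hl0, hkerh]
      · show LinearMap.range (lam • o h u') = L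
        rw [hs, o_range hlh, hqr]
  rw [hseteq]
  rw [Set.ncard_image_of_injOn (fun x _ y _ hxy => smul_cancel0 (o_ne_zero hh hu') hxy)]
  exact lam_card hfin hirr hf₀ hv₀ he hh hu' hm₁M

end E

namespace E
open LinearMap Module Stmt11Aux

variable {F : Type*} [Field F] {M : Submonoid (Module.End F (Fin 2 → F))}

lemma traceGroup_card (hfin : (M : Set (Module.End F (Fin 2 → F))).Finite)
    (hirr : ∀ W : Submodule F (Fin 2 → F), (∀ m ∈ M, ∀ w ∈ W, m w ∈ W) → W = ⊥ ∨ W = ⊤)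
    {f₀ : (Fin 2 → F) →ₗ[F] F} {v₀ : Fin 2 → F}
    (hf₀ : f₀ ≠ 0) (hv₀ : v₀ ≠ 0) (hfv : f₀ v₀ = 1) (he : o f₀ v₀ ∈ M) :
    Nat.card (traceGroup M) = (Lam M (o f₀ v₀)).ncard := by
  have hee : o f₀ v₀ * o f₀ v₀ = o f₀ v₀ := by rw [o_mul, hfv, one_smul]
  have he0 : o f₀ v₀ ≠ 0 := o_ne_zero hf₀ hv₀
  let LamG : Subgroup Fˣ :=
    { carrier := {z : Fˣ | (z : F) • o f₀ v₀ ∈ M}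
      mul_mem' := by
        intro z w hz hw
        have := lam_mul_mem hee ⟨z.ne_zero, hz⟩ ⟨w.ne_zero, hw⟩
        simpa [Units.val_mul] using this.2
      one_mem' := by
        show ((1 : Fˣ) : F) • o f₀ v₀ ∈ M
        simpa using he
      inv_mem' := by
        intro z hz
        have := lam_inv_mem hfin he hee he0 ⟨z.ne_zero, hz⟩
        show ((z⁻¹ : Fˣ) : F) • o f₀ v₀ ∈ M
        rw [Units.val_inv_eq_inv_val]
        exact this.2 }
  have htg : traceGroup M = LamG := by
    apply le_antisymm
    · rw [traceGroup, Subgroup.closure_le]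
      rintro z ⟨m, hmM, hmU, htr⟩
      have hm0 : m ≠ 0 := by
        intro h0
        rw [h0, map_zero] at htr
        exact z.ne_zero htr
      obtain ⟨g, w, hg, hw, rfl⟩ := exists_o hm0 hmU
      have ht : g w = (z : F) := by rw [o_trace] at htr; exact htr.symm
      have htne : g w ≠ 0 := by rw [ht]; exact z.ne_zero
      have hmm : o g w * o g w = (g w) • o g w := o_mul g g w w
      obtain ⟨heM, hee'⟩ := idem_extract hfin hmM (o_ne_zero hg hw) hmm htne
      rw [o_smul] at heM hee'
      have hfne : (g w)⁻¹ • g ≠ 0 := smul_ne_zero (inv_ne_zero htne) hg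
      have hfw1 : ((g w)⁻¹ • g) w = 1 := by
        simp only [LinearMap.smul_apply, smul_eq_mul]
        exact inv_mul_cancel₀ htne
      have hLeq : Lam M (o ((g w)⁻¹ • g) w) = Lam M (o f₀ v₀) :=
        lam_eq_of_idems hfin hirr hf₀ hv₀ he hfv hfne hw heM hfw1
      have htin : g w ∈ Lam M (o ((g w)⁻¹ • g) w) := by
        refine ⟨htne, ?_⟩
        have hrec : (g w) • o ((g w)⁻¹ • g) w = o g w := by
          rw [← o_smul, smul_smul, mul_inv_cancel₀ htne, one_smul]
        rw [hrec]; exact hmM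
      rw [hLeq] at htin
      show (z : F) • o f₀ v₀ ∈ M
      rw [← ht]; exact htin.2
    · intro z hz
      apply Subgroup.subset_closure
      refine ⟨(z : F) • o f₀ v₀, hz, ?_, ?_⟩
      · rw [o_smul]; exact o_not_unit (smul_ne_zero z.ne_zero hf₀) hv₀
      · rw [map_smul, o_trace, hfv, smul_eq_mul, mul_one]
  rw [htg, ← Nat.card_coe_set_eq]
  apply Nat.card_congr
  exact
    { toFun := fun z => ⟨(z.1 : F), z.1.ne_zero, z.2⟩
      invFun := fun lam => ⟨Units.mk0 lam.1 lam.2.1, lam.2.2⟩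
      left_inv := fun z => Subtype.ext (Units.ext rfl)
      right_inv := fun lam => rfl }

end E

open Stmt11Aux E

/-- A finite irreducible projection monoid `M` on `F²` with trace
group `G`, `k` kernels and `l` images has exactly `k·l·|G|` non-zero non-invertible
elements; moreover `0 ∈ M` iff some line is both a kernel and an image of `M`. -/
theorem stmt_11 {F : Type*} [Field F]
    (M : Submonoid (Module.End F (Fin 2 → F)))
    (hfin : (M : Set (Module.End F (Fin 2 → F))).Finite)
    (hgen : ∃ P : Set (Module.End F (Fin 2 → F)),
      (∀ p ∈ P, IsProj2 p) ∧ M = Submonoid.closure P)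
    (hirr : ∀ W : Submodule F (Fin 2 → F), (∀ m ∈ M, ∀ w ∈ W, m w ∈ W) →
      W = ⊥ ∨ W = ⊤) :
    Nat.card {m : Module.End F (Fin 2 → F) | m ∈ M ∧ m ≠ 0 ∧ ¬ IsUnit m}
      = Nat.card (kersOf M) * Nat.card (imsOf M) * Nat.card (traceGroup M) ∧
    ((0 : Module.End F (Fin 2 → F)) ∈ M ↔ ∃ K, K ∈ kersOf M ∧ K ∈ imsOf M) := by
  classical
  obtain ⟨f₀, v₀, hf₀, hv₀, hfv, he⟩ := exists_base hgen hirr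
  constructor
  · -- the counting statement
    set S : Set (Module.End F (Fin 2 → F)) := {m | m ∈ M ∧ m ≠ 0 ∧ ¬ IsUnit m} with hS
    have hSfin : S.Finite := hfin.subset (fun m hm => hm.1)
    have hKfin : (kersOf M).Finite := by
      apply (hfin.image (fun m => LinearMap.ker m)).subset
      rintro K ⟨p, hpM, -, hpk⟩
      exact ⟨p, hpM, hpk⟩
    have hLfin : (imsOf M).Finite := by
      apply (hfin.image (fun m => LinearMap.range m)).subset
      rintro L ⟨p, hpM, -, hpk⟩
      exact ⟨p, hpM, hpk⟩
    haveI : Fintype ↥S := hSfin.fintype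
    haveI : Fintype ↥(kersOf M) := hKfin.fintype
    haveI : Fintype ↥(imsOf M) := hLfin.fintype
    set Φ : ↥S → ↥(kersOf M) × ↥(imsOf M) := fun s =>
      (⟨LinearMap.ker s.1, (S_mem hfin hirr s.2.1 s.2.2.1 s.2.2.2).1⟩,
       ⟨LinearMap.range s.1, (S_mem hfin hirr s.2.1 s.2.2.1 s.2.2.2).2⟩) with hΦ
    have h1 : Nat.card ↥S
        = Nat.card (Σ p : ↥(kersOf M) × ↥(imsOf M), {s : ↥S // Φ s = p}) :=
      (Nat.card_congr (Equiv.sigmaFiberEquiv Φ)).symm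
    have h2 : ∀ p : ↥(kersOf M) × ↥(imsOf M),
        Nat.card {s : ↥S // Φ s = p} = (Lam M (o f₀ v₀)).ncard := by
      rintro ⟨⟨K, hK⟩, ⟨L, hL⟩⟩
      have e1 : {s : ↥S // Φ s = (⟨K, hK⟩, ⟨L, hL⟩)}
          ≃ ↥{m : Module.End F (Fin 2 → F) | (m ∈ M ∧ m ≠ 0 ∧ ¬ IsUnit m) ∧
              LinearMap.ker m = K ∧ LinearMap.range m = L} :=
        { toFun := fun x => ⟨x.1.1, ⟨x.1.2, by
            have h := x.2
            rw [Prod.ext_iff] at h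
            exact ⟨congrArg Subtype.val h.1, congrArg Subtype.val h.2⟩⟩⟩
          invFun := fun y => ⟨⟨y.1, y.2.1⟩, by
            have h := y.2.2
            exact Prod.ext (Subtype.ext h.1) (Subtype.ext h.2)⟩
          left_inv := fun x => Subtype.ext (Subtype.ext rfl)
          right_inv := fun y => rfl }
      rw [Nat.card_congr e1, Nat.card_coe_set_eq]
      exact pair_card hfin hirr hf₀ hv₀ he hK hL
    have h3 : Nat.card (Σ p : ↥(kersOf M) × ↥(imsOf M), {s : ↥S // Φ s = p})
        = Fintype.card (↥(kersOf M) × ↥(imsOf M)) * (Lam M (o f₀ v₀)).ncard := by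
      rw [Nat.card_eq_fintype_card, Fintype.card_sigma]
      have hterm : ∀ p : ↥(kersOf M) × ↥(imsOf M),
          Fintype.card {s : ↥S // Φ s = p} = (Lam M (o f₀ v₀)).ncard := fun p => by
        rw [← h2 p, Nat.card_eq_fintype_card]
      rw [Finset.sum_congr rfl (fun p _ => hterm p), Finset.sum_const, smul_eq_mul,
        Finset.card_univ]
    have h4 : Nat.card (traceGroup M) = (Lam M (o f₀ v₀)).ncard :=
      traceGroup_card hfin hirr hf₀ hv₀ hfv he
    calc Nat.card ↥S
        = Fintype.card (↥(kersOf M) × ↥(imsOf M)) * (Lam M (o f₀ v₀)).ncard := by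
          rw [h1, h3]
      _ = Nat.card (↥(kersOf M) × ↥(imsOf M)) * (Lam M (o f₀ v₀)).ncard := by
          rw [Nat.card_eq_fintype_card]
      _ = Nat.card (kersOf M) * Nat.card (imsOf M) * Nat.card (traceGroup M) := by
          rw [Nat.card_prod, h4]
  · -- the zero statement
    constructor
    · intro h0
      obtain ⟨P, hP, hMP⟩ := hgen
      have key : ∀ m (hm : m ∈ Submonoid.closure P), m = 0 →
          ∃ K, K ∈ kersOf M ∧ K ∈ imsOf M := by
        intro m hm
        induction hm using Submonoid.closure_induction with
        | mem p hp =>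
          intro hp0
          exfalso
          have h2 := (hP p hp).2
          rw [hp0, LinearMap.range_zero, finrank_bot] at h2
          norm_num at h2
        | one =>
          intro h1
          exfalso
          have h2 := congrArg (fun (n : Module.End F (Fin 2 → F)) =>
            n (Pi.single 0 1)) h1
          simp only [Module.End.one_apply, LinearMap.zero_apply] at h2
          have h3 := congrFun h2 0
          simp at h3
        | mul x y hx hy ihx ihy =>
          intro hxy
          by_cases hx0 : x = 0
          · exact ihx hx0
          by_cases hy0 : y = 0
          · exact ihy hy0
          have hxM : x ∈ M := by rw [hMP]; exact hx
          have hyM : y ∈ M := by rw [hMP]; exact hy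
          by_cases hxu : IsUnit x
          · exfalso
            apply hy0
            calc y = (↑hxu.unit⁻¹ * x) * y := by rw [hxu.val_inv_mul, one_mul]
              _ = ↑hxu.unit⁻¹ * (x * y) := by rw [mul_assoc]
              _ = 0 := by rw [hxy, mul_zero]
          by_cases hyu : IsUnit y
          · exfalso
            apply hx0
            calc x = x * (y * ↑hyu.unit⁻¹) := by rw [hyu.mul_val_inv, mul_one]
              _ = (x * y) * ↑hyu.unit⁻¹ := by rw [mul_assoc]
              _ = 0 := by rw [hxy, zero_mul]
          obtain ⟨f, v, hf, hv, rfl⟩ := exists_o hx0 hxu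
          obtain ⟨g, w, hg, hw, rfl⟩ := exists_o hy0 hyu
          have hfw : f w = 0 := by
            rw [o_mul] at hxy
            rcases smul_eq_zero.mp hxy with h' | h'
            · exact h'
            · exact absurd h' (o_ne_zero hg hv)
          refine ⟨Submodule.span F {w}, ?_, (mem_kers_ims hfin hirr hg hw hyM).2⟩
          have hkf : LinearMap.ker f ∈ kersOf M := (mem_kers_ims hfin hirr hf hv hxM).1
          have hsp : Submodule.span F {w} = LinearMap.ker f := by
            apply Submodule.eq_of_le_of_finrank_eq
            · rw [Submodule.span_le, Set.singleton_subset_iff]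
              exact LinearMap.mem_ker.mpr hfw
            · rw [finrank_span_singleton hw, ker_line hf]
          rw [hsp]
          exact hkf
      exact key 0 (by rw [← hMP]; exact h0) rfl
    · rintro ⟨K, ⟨p, hpM, hpP, hpk⟩, ⟨q, hqM, hqP, hqr⟩⟩
      have hpq : p * q = 0 := by
        refine LinearMap.ext fun x => ?_
        have hx : q x ∈ K := by rw [← hqr]; exact ⟨x, rfl⟩
        rw [← hpk] at hx
        exact LinearMap.mem_ker.mp hx
      rw [← hpq]
      exact M.mul_mem hpM hqM
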